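/- Let n = 2, τ > 0, and let A, B, H(λ,K) be as in the context (so A = [[1,τ],[0,1]] and B = [0,τ]^T). Let 0 < λ_2 ≤ λ_N, and define K*_1 = 2λ_2/(τ^2(λ_2 + λ_N)λ_N) and K*_2 = 2/(λ_N τ). Then for every λ with λ_2 ≤ λ ≤ λ_N, the spectral radius satisfies ρ(H(λ, [K*_1, K*_2])) ≤ √((λ_N − λ_2)/(λ_N + λ_2)). -/

import Mathlib

/-!
The closed-loop matrix has trace `t = 2 (1 - λ / λ_N)` and determinant
`d = 1 - 2 λ / (λ₂ + λ_N)`, so its eigenvalues are the roots of `X² - t X + d`. For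
`r = √((λ_N - λ₂) / (λ_N + λ₂))` the Jury conditions `|d| ≤ r²`, `|t| ≤ 2 r` and `|t| r ≤ r² + d`
hold on `λ₂ ≤ λ ≤ λ_N`, which puts both roots in the closed disk of radius `r`. The last condition
holds because `r² + d = t λ_N / (λ₂ + λ_N)` while `r ≤ λ_N / (λ₂ + λ_N)`.
-/

open Matrix

/-- The n×n system matrix `A`: ones on the diagonal, `τ` on the superdiagonal
(for `n = 2` this is `[[1, τ], [0, 1]]`). -/
noncomputable def Amat (n : ℕ) (τ : ℝ) : Matrix (Fin n) (Fin n) ℝ :=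
  Matrix.of fun i j => if (j : ℕ) = (i : ℕ) then 1 else if (j : ℕ) = (i : ℕ) + 1 then τ else 0

/-- The n×1 input matrix `B`: last entry `τ`, all other entries `0`
(for `n = 2` this is `[0, τ]ᵀ`). -/
noncomputable def Bmat (n : ℕ) (τ : ℝ) : Matrix (Fin n) (Fin 1) ℝ :=
  Matrix.of fun i _ => if (i : ℕ) = n - 1 then τ else 0

/-- `H(λ, K) = A - λ B K`. -/
noncomputable def Hmat (n : ℕ) (τ : ℝ) (lam : ℝ) (K : Matrix (Fin 1) (Fin n) ℝ) :
    Matrix (Fin n) (Fin n) ℝ :=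
  Amat n τ - lam • (Bmat n τ * K)

/-- Spectral radius of a real matrix: the largest modulus of its complex eigenvalues. -/
noncomputable def specRad {n : ℕ} (M : Matrix (Fin n) (Fin n) ℝ) : ℝ :=
  sSup ((‖·‖) '' spectrum ℂ (M.map (Complex.ofReal ·)))

theorem Matrix.sq_sub_trace_mul_add_det_eq_zero {K L : Type*} [Field K] [Field L] (f : K →+* L)
    {M : Matrix (Fin 2) (Fin 2) K} {μ : L} (hμ : μ ∈ spectrum L (M.map f)) :
    μ ^ 2 - f M.trace * μ + f M.det = 0 := by
  rw [Matrix.mem_spectrum_iff_isRoot_charpoly, Matrix.charpoly_map, Matrix.charpoly_fin_two,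
    Polynomial.IsRoot.def, Polynomial.eval_map] at hμ
  simpa [Polynomial.eval₂_sub, Polynomial.eval₂_add] using hμ

lemma specRad_le {n : ℕ} {M : Matrix (Fin n) (Fin n) ℝ} {r : ℝ} (hr : 0 ≤ r)
    (h : ∀ μ ∈ spectrum ℂ (M.map (Complex.ofReal ·)), ‖μ‖ ≤ r) : specRad M ≤ r :=
  Real.sSup_le (by rintro _ ⟨μ, hμ, rfl⟩; exact h μ hμ) hr

/-- Closed-disk form of the Schur–Cohn–Jury test for `X² - t X + d`. -/
theorem Complex.norm_le_of_sq_sub_mul_add_eq_zero {t d r : ℝ} (hd : |d| ≤ r ^ 2)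
    (ht : |t| ≤ 2 * r) (htd : |t| * r ≤ r ^ 2 + d) {μ : ℂ}
    (hμ : μ ^ 2 - t * μ + d = 0) : ‖μ‖ ≤ r := by
  have hr : 0 ≤ r := by linarith [abs_nonneg t]
  have hre : μ.re ^ 2 - μ.im ^ 2 - t * μ.re + d = 0 := by
    simpa [pow_two] using congrArg Complex.re hμ
  have him : μ.im * (2 * μ.re - t) = 0 := by
    have := congrArg Complex.im hμ
    simp only [pow_two, Complex.sub_im, Complex.mul_im, Complex.ofReal_re, Complex.ofReal_im,
      Complex.add_im, Complex.zero_im] at this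
    linarith
  refine (pow_le_pow_iff_left₀ (norm_nonneg μ) hr two_ne_zero).1 ?_
  rw [Complex.sq_norm, Complex.normSq_apply]
  rcases mul_eq_zero.1 him with hreal | hpair
  · -- For a real root `x` with `|x| > r`:
    -- `x² - t x + d ≥ (|x| - r)(|x| + r - |t|) + (r² - |t| r + d) > 0`.
    have hx : |μ.re| ≤ r := by
      by_contra! hx
      have htx : t * μ.re ≤ |t| * |μ.re| := by rw [← abs_mul]; exact le_abs_self _
      nlinarith [sq_abs μ.re, mul_pos (sub_pos.2 hx) (by linarith : 0 < |μ.re| + r - |t|)]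
    rw [hreal]
    nlinarith [sq_le_sq.2 (hx.trans_eq (abs_of_nonneg hr).symm), sq_abs μ.re]
  · have htx : t = 2 * μ.re := by linarith
    subst htx
    linarith [(abs_le.1 hd).2]

lemma Hmat_two_eq (τ lam k₁ k₂ : ℝ) :
    Hmat 2 τ lam !![k₁, k₂] = !![1, τ; -(lam * τ * k₁), 1 - lam * τ * k₂] := by
  ext i j
  fin_cases i <;> fin_cases j <;>
    simp [Hmat, Amat, Bmat, Matrix.mul_apply] <;> ring

lemma trace_Hmat_two (τ lam k₁ k₂ : ℝ) : (Hmat 2 τ lam !![k₁, k₂]).trace = 2 - lam * τ * k₂ := by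
  rw [Hmat_two_eq, trace_fin_two_of]; ring

lemma det_Hmat_two (τ lam k₁ k₂ : ℝ) :
    (Hmat 2 τ lam !![k₁, k₂]).det = 1 - lam * τ * k₂ + lam * τ ^ 2 * k₁ := by
  rw [Hmat_two_eq, det_fin_two_of]; ring

section RateBounds

variable {l2 lN lam r : ℝ} (h2 : 0 < l2) (h2N : l2 ≤ lN) (hr0 : 0 ≤ r)
  (hr : r ^ 2 = (lN - l2) / (lN + l2))
include h2 h2N hr0 hr

lemma sub_div_le_rate : (lN - l2) / lN ≤ r := by
  have hlN : 0 < lN := h2.trans_le h2N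
  refine (pow_le_pow_iff_left₀ (div_nonneg (by linarith) hlN.le) hr0 two_ne_zero).1 ?_
  rw [hr, div_pow, div_le_div_iff₀ (by positivity) (by positivity)]
  nlinarith [mul_nonneg (sub_nonneg.2 h2N) (sq_nonneg l2)]

lemma rate_le_div_add : r ≤ lN / (lN + l2) := by
  have hlN : 0 < lN := h2.trans_le h2N
  refine (pow_le_pow_iff_left₀ hr0 (by positivity) two_ne_zero).1 ?_
  rw [hr, div_pow, div_le_div_iff₀ (by positivity) (by positivity)]
  nlinarith [mul_pos (mul_pos h2 h2) (add_pos hlN h2)]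

omit hr0 in
lemma abs_det_le_rate_sq (hlam2 : l2 ≤ lam) (hlamN : lam ≤ lN) :
    |1 - 2 * lam / (l2 + lN)| ≤ r ^ 2 := by
  have hs : 0 < l2 + lN := by linarith
  rw [hr, one_sub_div hs.ne', abs_div, abs_of_pos hs, add_comm lN,
    div_le_div_iff_of_pos_right hs, abs_le]
  constructor <;> linarith

lemma abs_trace_le_two_mul_rate (hlam2 : l2 ≤ lam) (hlamN : lam ≤ lN) :
    |2 * (1 - lam / lN)| ≤ 2 * r := by
  have hlN : 0 < lN := h2.trans_le h2N
  have ht : 0 ≤ 1 - lam / lN := sub_nonneg.2 ((div_le_one hlN).2 hlamN)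
  have hmono : 1 - lam / lN ≤ (lN - l2) / lN := by
    rw [sub_div, div_self hlN.ne']
    exact sub_le_sub_left (div_le_div_of_nonneg_right hlam2 hlN.le) 1
  rw [abs_of_nonneg (by positivity)]
  linarith [sub_div_le_rate h2 h2N hr0 hr]

lemma abs_trace_mul_rate_le (hlamN : lam ≤ lN) :
    |2 * (1 - lam / lN)| * r ≤ r ^ 2 + (1 - 2 * lam / (l2 + lN)) := by
  have hlN : 0 < lN := h2.trans_le h2N
  have ht : 0 ≤ 2 * (1 - lam / lN) := by
    have := (div_le_one hlN).2 hlamN; linarith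
  have hsum : r ^ 2 + (1 - 2 * lam / (l2 + lN)) = 2 * (1 - lam / lN) * (lN / (lN + l2)) := by
    rw [hr]; field_simp; ring
  rw [abs_of_nonneg ht, hsum]
  exact mul_le_mul_of_nonneg_left (rate_le_div_add h2 h2N hr0 hr) ht

end RateBounds

/-- for `n = 2`, `K* = [2λ₂/(τ²(λ₂+λ_N)λ_N), 2/(λ_N τ)]`, and every
`λ₂ ≤ λ ≤ λ_N`, one has `ρ(H(λ, K*)) ≤ √((λ_N − λ₂)/(λ_N + λ₂))`. -/
theorem stmt_8 (τ : ℝ) (hτ : 0 < τ) (l2 lN : ℝ) (h2 : 0 < l2) (h2N : l2 ≤ lN)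
    (lam : ℝ) (hlam2 : l2 ≤ lam) (hlamN : lam ≤ lN) :
    specRad (Hmat 2 τ lam !![2 * l2 / (τ ^ 2 * (l2 + lN) * lN), 2 / (lN * τ)])
      ≤ Real.sqrt ((lN - l2) / (lN + l2)) := by
  have hlN : 0 < lN := h2.trans_le h2N
  have hr0 := Real.sqrt_nonneg ((lN - l2) / (lN + l2))
  have hr := Real.sq_sqrt (div_nonneg (sub_nonneg.2 h2N) (add_pos hlN h2).le)
  refine specRad_le hr0 fun μ hμ => ?_
  have hchar := Matrix.sq_sub_trace_mul_add_det_eq_zero Complex.ofRealHom hμ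
  have htrace : 2 - lam * τ * (2 / (lN * τ)) = 2 * (1 - lam / lN) := by
    field_simp
  have hdet : 1 - lam * τ * (2 / (lN * τ)) + lam * τ ^ 2 * (2 * l2 / (τ ^ 2 * (l2 + lN) * lN))
      = 1 - 2 * lam / (l2 + lN) := by
    field_simp; ring
  rw [trace_Hmat_two, det_Hmat_two, htrace, hdet] at hchar
  exact Complex.norm_le_of_sq_sub_mul_add_eq_zero (abs_det_le_rate_sq h2 h2N hr hlam2 hlamN)
    (abs_trace_le_two_mul_rate h2 h2N hr0 hr hlam2 hlamN)
    (abs_trace_mul_rate_le h2 h2N hr0 hr hlamN) hchar
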